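/- Let n ≥ 2, let k ∈ {1,…,n}, and let S ⊆ {1,…,n} be a set of coordinates with k ∈ S and |S| ≥ 2. Let K = {x ∈ [0,1]^n : the restriction of x to the coordinates in S lies in the parity polytope of degree |S|} be the lifted local check polytope of a parity-check node whose variable-node neighborhood is S. Let Q ⊆ [0,1]^n be any set that does not constrain coordinate k, meaning: if x ∈ Q, t ∈ [0,1], and x' agrees with x on all coordinates except possibly x'_k = t, then x' ∈ Q. Then the projection of Q ∩ K onto the coordinates {1,…,n} ∖ {k} equals the projection of Q onto those coordinates. Consequently, for any objective vector c ∈ ℝ^n with c_k = 0, the infimum of cᵀx over Q ∩ K equals the infimum of cᵀx over Q: the constraints of a parity-check node connected to a degree-1 auxiliary variable node (a variable appearing in no other constraint and with zero objective coefficient) do not affect the LP decoder solution, so that node and its check-node neighbor can be deleted. (Lemma 1.) -/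

import Mathlib

/-!
Forgetting one coordinate maps the even-weight binary vectors onto all binary vectors of the
remaining coordinates, since the forgotten bit can always be chosen to fix the parity. As linear
maps commute with convex hulls, the parity polytope therefore projects onto the whole cube of the
remaining coordinates: every point of the cube extends, by a suitable value in the forgotten
coordinate, to a point of the parity polytope. Hence a point of `Q` can be moved into `Q ∩ K` by
changing only its unconstrained coordinate `k`, which neither the projection nor an objective with
`c k = 0` sees.
-/

/-- The parity polytope of degree `d`: the convex hull in `ℝ^d` of the binary
vectors with an even number of ones. -/
def parityPolytope (d : ℕ) : Set (Fin d → ℝ) :=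
  convexHull ℝ {x : Fin d → ℝ | ∃ c : Fin d → Bool,
    Even (Finset.univ.filter (fun i => c i = true)).card ∧
    x = fun i => if c i then 1 else 0}

/-- The lifted local check polytope of a parity-check node with variable-node
neighborhood `S`: all `x ∈ [0,1]^n` whose restriction to the coordinates in `S`
(listed in increasing order) lies in the parity polytope of degree `|S|`. -/
def liftedCheckPolytope {n : ℕ} (S : Finset (Fin n)) : Set (Fin n → ℝ) :=
  {x | (∀ i, x i ∈ Set.Icc (0 : ℝ) 1) ∧
    (fun t : Fin S.card => x ((S.orderIsoOfFin rfl t : S) : Fin n)) ∈ parityPolytope S.card}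

open Function Set Finset

section Parity

variable {ι : Type*} [Fintype ι] [DecidableEq ι]

lemma card_filter_update_true (c : ι → Bool) (j : ι) :
    #{i | update c j true i = true} = #{i | update c j false i = true} + 1 := by
  have hinsert : univ.filter (fun i => update c j true i = true)
      = insert j (univ.filter fun i => update c j false i = true) := by
    ext i
    rcases eq_or_ne i j with rfl | hi <;> simp_all
  rw [hinsert, card_insert_of_notMem (by simp)]

lemma exists_even_card_filter_update (c : ι → Bool) (j : ι) :
    ∃ b, Even #{i | update c j b i = true} := by
  by_cases heven : Even #{i | update c j false i = true}
  · exact ⟨false, heven⟩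
  · exact ⟨true, by rw [card_filter_update_true]; exact Nat.even_add_one.mpr heven⟩

end Parity

def parityVertices (d : ℕ) : Set (Fin d → ℝ) :=
  {x | ∃ c : Fin d → Bool, Even #{i | c i = true} ∧ x = fun i => if c i then 1 else 0}

lemma parityPolytope_eq_convexHull (d : ℕ) :
    parityPolytope d = convexHull ℝ (parityVertices d) := rfl

lemma parityPolytope_subset_box (d : ℕ) :
    parityPolytope d ⊆ {x | ∀ i, x i ∈ Icc (0 : ℝ) 1} := by
  refine convexHull_min ?_ fun x hx y hy a b ha hb hab i =>
    convex_Icc (0 : ℝ) 1 (hx i) (hy i) ha hb hab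
  rintro x ⟨c, -, rfl⟩ i
  by_cases h : c i <;> simp [h]

lemma pi_zero_one_subset_image_parityVertices {d : ℕ} (j : Fin d) :
    univ.pi (fun _ => ({0, 1} : Set ℝ))
      ⊆ LinearMap.funLeft ℝ ℝ (Subtype.val : {i // i ≠ j} → Fin d) '' parityVertices d := by
  intro w hw
  let c : Fin d → Bool := fun i => if h : i = j then false else decide (w ⟨i, h⟩ = 1)
  obtain ⟨b, hb⟩ := exists_even_card_filter_update c j
  refine ⟨_, ⟨update c j b, hb, rfl⟩, funext fun i => ?_⟩
  obtain h | h : w i = 0 ∨ w i = 1 := hw i (mem_univ _)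
  all_goals simp [LinearMap.funLeft_apply, c, i.2, h]

lemma exists_update_mem_parityPolytope {d : ℕ} (j : Fin d) {y : Fin d → ℝ}
    (hy : ∀ i, y i ∈ Icc (0 : ℝ) 1) :
    ∃ t ∈ Icc (0 : ℝ) 1, update y j t ∈ parityPolytope d := by
  set π := LinearMap.funLeft ℝ ℝ (Subtype.val : {i // i ≠ j} → Fin d)
  have hproj : π y ∈ π '' parityPolytope d := by
    rw [parityPolytope_eq_convexHull, π.image_convexHull]
    refine convexHull_mono (pi_zero_one_subset_image_parityVertices j)
      (mem_convexHull_pi fun i _ => ?_)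
    rw [convexHull_pair, segment_eq_Icc zero_le_one]
    exact hy i
  obtain ⟨z, hz, hzy⟩ := hproj
  have hz_eq : z = update y j (z j) :=
    eq_update_iff.2 ⟨rfl, fun i hi => congrFun hzy ⟨i, hi⟩⟩
  exact ⟨z j, parityPolytope_subset_box d hz j, hz_eq ▸ hz⟩

lemma exists_update_mem_liftedCheckPolytope {n : ℕ} {S : Finset (Fin n)} {k : Fin n}
    (hk : k ∈ S) {x : Fin n → ℝ} (hx : ∀ i, x i ∈ Icc (0 : ℝ) 1) :
    ∃ t ∈ Icc (0 : ℝ) 1, update x k t ∈ liftedCheckPolytope S := by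
  let g : Fin #S → Fin n := fun t => (S.orderIsoOfFin rfl t : Fin n)
  have hg : Injective g := Subtype.val_injective.comp (OrderIso.injective _)
  let j := (S.orderIsoOfFin rfl).symm ⟨k, hk⟩
  have hgj : g j = k := congrArg Subtype.val ((S.orderIsoOfFin rfl).apply_symm_apply _)
  obtain ⟨t, ht, hmem⟩ := exists_update_mem_parityPolytope j (y := x ∘ g) fun i => hx (g i)
  refine ⟨t, ht, (forall_update_iff x fun _ v => v ∈ Icc (0 : ℝ) 1).2 ⟨ht, fun i _ => hx i⟩, ?_⟩
  have hrestrict : update x k t ∘ g = update (x ∘ g) j t := by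
    rw [← hgj]
    exact update_comp_eq_of_injective x hg j t
  change update x k t ∘ g ∈ _
  rwa [hrestrict]

lemma image_inter_eq_image_of_exists_update {α β γ : Type*} [DecidableEq α]
    {Q K : Set (α → β)} {k : α} (hQK : ∀ x ∈ Q, ∃ t, update x k t ∈ Q ∩ K)
    {f : (α → β) → γ} (hf : ∀ x t, f (update x k t) = f x) :
    f '' (Q ∩ K) = f '' Q := by
  refine (image_mono inter_subset_left).antisymm ?_
  rintro _ ⟨x, hx, rfl⟩
  obtain ⟨t, ht⟩ := hQK x hx
  exact ⟨_, ht, hf x t⟩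

lemma sum_mul_update_of_eq_zero {ι R : Type*} [Fintype ι] [DecidableEq ι] [CommSemiring R]
    {c : ι → R} {k : ι} (hc : c k = 0) (x : ι → R) (t : R) :
    ∑ i, c i * update x k t i = ∑ i, c i * x i :=
  Finset.sum_congr rfl fun i _ => by
    rcases eq_or_ne i k with rfl | hi
    · simp [hc]
    · rw [update_of_ne hi]

theorem degree_one_aux_var_check_removable_general (n : ℕ) (k : Fin n)
    (S : Finset (Fin n)) (hkS : k ∈ S)
    (Q : Set (Fin n → ℝ))
    (hQbox : Q ⊆ {x | ∀ i, x i ∈ Set.Icc (0 : ℝ) 1})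
    (hQfree : ∀ x ∈ Q, ∀ t ∈ Set.Icc (0 : ℝ) 1, Function.update x k t ∈ Q) :
    ((fun x : Fin n → ℝ => fun i : {i : Fin n // i ≠ k} => x i) ''
          (Q ∩ liftedCheckPolytope S)
        = (fun x : Fin n → ℝ => fun i : {i : Fin n // i ≠ k} => x i) '' Q) ∧
      ∀ c : Fin n → ℝ, c k = 0 →
        sInf ((fun x : Fin n → ℝ => ∑ i, c i * x i) '' (Q ∩ liftedCheckPolytope S))
          = sInf ((fun x : Fin n → ℝ => ∑ i, c i * x i) '' Q) := by
  have hQK : ∀ x ∈ Q, ∃ t, update x k t ∈ Q ∩ liftedCheckPolytope S := fun x hx => by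
    obtain ⟨t, ht, hK⟩ := exists_update_mem_liftedCheckPolytope hkS (hQbox hx)
    exact ⟨t, hQfree x hx t ht, hK⟩
  refine ⟨image_inter_eq_image_of_exists_update hQK fun x t => ?_, fun c hc => ?_⟩
  · exact funext fun i => update_of_ne i.2 _ _
  · rw [image_inter_eq_image_of_exists_update hQK fun x t => sum_mul_update_of_eq_zero hc x t]

/-- **Lemma 1.** Let `k ∈ S`, `|S| ≥ 2`, and let `K` be the lifted
local check polytope of a check node with neighborhood `S`. If `Q ⊆ [0,1]^n`
does not constrain the coordinate `k` (a degree-1 auxiliary variable node),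
then the projection of `Q ∩ K` onto the coordinates `≠ k` equals that of `Q`;
consequently, for any objective `c` with `c k = 0`, the infimum of `cᵀx` over
`Q ∩ K` equals the infimum over `Q`: the check node and the degree-1 auxiliary
variable node can be deleted without affecting the LP decoder solution. -/
theorem degree_one_aux_var_check_removable (n : ℕ) (hn : 2 ≤ n) (k : Fin n)
    (S : Finset (Fin n)) (hkS : k ∈ S) (hS : 2 ≤ S.card)
    (Q : Set (Fin n → ℝ))
    (hQbox : Q ⊆ {x | ∀ i, x i ∈ Set.Icc (0 : ℝ) 1})
    (hQfree : ∀ x ∈ Q, ∀ t ∈ Set.Icc (0 : ℝ) 1, Function.update x k t ∈ Q) :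
    ((fun x : Fin n → ℝ => fun i : {i : Fin n // i ≠ k} => x i) ''
          (Q ∩ liftedCheckPolytope S)
        = (fun x : Fin n → ℝ => fun i : {i : Fin n // i ≠ k} => x i) '' Q) ∧
      ∀ c : Fin n → ℝ, c k = 0 →
        sInf ((fun x : Fin n → ℝ => ∑ i, c i * x i) '' (Q ∩ liftedCheckPolytope S))
          = sInf ((fun x : Fin n → ℝ => ∑ i, c i * x i) '' Q) :=
  degree_one_aux_var_check_removable_general n k S hkS Q hQbox hQfree
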